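/- arXiv:1902.05831 — 3 statements merged into one kernel-verified Lean document; each statement's English description precedes it below -/
import Mathlib

section
/- Let n ≥ 1 and let Ω be a finite nonempty subset of the integer lattice graph ℤ^n. Then the multiplicity of 0 as an eigenvalue of the Dirichlet-to-Neumann operator Λ : ℝ^{δΩ} → ℝ^{δΩ} (i.e., the dimension of the kernel of Λ) equals the number of connected components of the graph with vertex set Ω̄ and edge set E(Ω, Ω̄). -/
/-!
Write `L` for the Laplacian matrix of the graph `(Ω̄, E(Ω, Ω̄))`. For `u` on `Ω̄`, `(L u)(x)` is
`-Δu(x)` at `x ∈ Ω` and `∂u/∂n(x)` at `x ∈ δΩ`, so restriction to `δΩ` maps `ker L` onto `ker Λ`.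
Everything else rests on one uniqueness statement: if `L ψ = 0` on `Ω` and `ψ = 0` on `δΩ`, then
the energy `⟨ψ, L ψ⟩` vanishes, so `ψ` is constant on components; every component meets `δΩ`
(walk out of the finite set `Ω` along a coordinate axis), hence `ψ = 0`. This makes the restriction
injective on `ker L` and the Dirichlet problem uniquely solvable, and `dim ker L` is the number of
components.
-/

open scoped ENNReal

namespace SteklovLattice

/-- Adjacency in the integer lattice graph `ℤ^n`. -/
def adj {n : ℕ} (x y : Fin n → ℤ) : Prop := (∑ i, |x i - y i|) = 1

/-- The vertex boundary `δΩ`. -/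
def vb {n : ℕ} (Ω : Set (Fin n → ℤ)) : Set (Fin n → ℤ) :=
  {x | x ∉ Ω ∧ ∃ y ∈ Ω, adj x y}

/-- `Ω̄ = Ω ∪ δΩ`. -/
def cl {n : ℕ} (Ω : Set (Fin n → ℤ)) : Set (Fin n → ℤ) := Ω ∪ vb Ω

/-- The set `δ'Ω` of "bad" boundary vertices: boundary vertices all of whose
neighbours lie in `Ω`. -/
def badVb {n : ℕ} (Ω : Set (Fin n → ℤ)) : Set (Fin n → ℤ) :=
  {x | x ∈ vb Ω ∧ ∀ y, adj x y → y ∈ Ω}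

/-- The graph Laplacian `Δu(x) = ∑_{y ~ x} (u(y) − u(x))`. -/
noncomputable def lap {n : ℕ} (u : (Fin n → ℤ) → ℝ) (x : Fin n → ℤ) : ℝ :=
  ∑ᶠ y ∈ {y | adj x y}, (u y - u x)

/-- The outward normal derivative `∂u/∂n(x) = ∑_{y ∈ Ω, y ~ x} (u(x) − u(y))`. -/
noncomputable def normalDeriv {n : ℕ} (Ω : Set (Fin n → ℤ)) (u : (Fin n → ℤ) → ℝ)
    (x : Fin n → ℤ) : ℝ :=
  ∑ᶠ y ∈ {y | y ∈ Ω ∧ adj x y}, (u x - u y)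

/-- `u` is a harmonic extension of `φ : δΩ → ℝ`: it is harmonic at every point of `Ω`
and agrees with `φ` on `δΩ`. -/
def IsHarmonicExt {n : ℕ} (Ω : Set (Fin n → ℤ)) (φ : ↥(vb Ω) → ℝ)
    (u : (Fin n → ℤ) → ℝ) : Prop :=
  (∀ x ∈ Ω, lap u x = 0) ∧ ∀ (x : Fin n → ℤ) (hx : x ∈ vb Ω), u x = φ ⟨x, hx⟩

open Classical in
/-- A choice of harmonic extension of `φ` (the harmonic extension exists and its values
on `Ω̄` are unique). -/
noncomputable def harmExt {n : ℕ} (Ω : Set (Fin n → ℤ)) (φ : ↥(vb Ω) → ℝ) :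
    (Fin n → ℤ) → ℝ :=
  if h : ∃ u, IsHarmonicExt Ω φ u then h.choose else 0

/-- The Dirichlet-to-Neumann operator `Λφ = ∂u_φ/∂n`. -/
noncomputable def dtn {n : ℕ} (Ω : Set (Fin n → ℤ)) (φ : ↥(vb Ω) → ℝ) : ↥(vb Ω) → ℝ :=
  fun x => normalDeriv Ω (harmExt Ω φ) x

/-- The edge set `E(Ω, Ω̄)` of edges joining a vertex of `Ω` to a vertex of `Ω̄`,
as a set of unordered pairs. -/
def bedges {n : ℕ} (Ω : Set (Fin n → ℤ)) : Set (Sym2 (Fin n → ℤ)) :=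
  {e | ∃ x y, e = s(x, y) ∧ adj x y ∧ x ∈ Ω ∧ y ∈ cl Ω}

/-- The Dirichlet bilinear form `D_Ω(u,v) = ∑_{{x,y} ∈ E(Ω,Ω̄)} (u(x)−u(y))(v(x)−v(y))`. -/
noncomputable def dirichlet {n : ℕ} (Ω : Set (Fin n → ℤ)) (u v : (Fin n → ℤ) → ℝ) : ℝ :=
  ∑ᶠ e ∈ bedges Ω, Sym2.lift ⟨fun x y => (u x - u y) * (v x - v y), fun _ _ => by ring⟩ e

/-- The `k`-th Steklov eigenvalue (1-indexed, with multiplicity, in increasing order) of the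
Dirichlet-to-Neumann operator of `Ω`, defined via the Courant–Fischer min-max principle,
valued in `ℝ≥0∞`; it equals `+∞` for `k > |δΩ|`. -/
noncomputable def steklovEig {n : ℕ} (Ω : Set (Fin n → ℤ)) (k : ℕ) : ℝ≥0∞ :=
  sInf {C : ℝ≥0∞ | ∃ W : Submodule ℝ (↥(vb Ω) → ℝ), Module.finrank ℝ W = k ∧
    ∀ φ ∈ W, ENNReal.ofReal (∑ᶠ x : ↥(vb Ω), dtn Ω φ x * φ x)
      ≤ C * ENNReal.ofReal (∑ᶠ x : ↥(vb Ω), φ x * φ x)}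

/-- `ω_n`, the Lebesgue volume of the unit ball in `ℝ^n`. -/
noncomputable def unitBallVol (n : ℕ) : ℝ :=
  (MeasureTheory.volume (Metric.ball (0 : EuclideanSpace ℝ (Fin n)) 1)).toReal

/-- Embedding of the lattice `ℤ^n` into Euclidean space `ℝ^n`. -/
noncomputable def toEuc {n : ℕ} (x : Fin n → ℤ) : EuclideanSpace ℝ (Fin n) :=
  (EuclideanSpace.equiv (Fin n) ℝ).symm (fun i => (x i : ℝ))

/-- The edge boundary `∂Ω`, represented as ordered pairs
(endpoint in `Ω`, endpoint outside `Ω`); the outside endpoint `p.2` is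
the vertex `P(τ⊥) ∈ δΩ` of the boundary edge `τ = {p.1, p.2}`. -/
def bEdge {n : ℕ} (Ω : Set (Fin n → ℤ)) : Set ((Fin n → ℤ) × (Fin n → ℤ)) :=
  {p | adj p.1 p.2 ∧ p.1 ∈ Ω ∧ p.2 ∉ Ω}

/-- `τ⊥`: the closed `(n−1)`-dimensional unit cube centered at the midpoint of the edge
`{a,b}` and orthogonal to it. -/
def perpCube {n : ℕ} (a b : Fin n → ℤ) : Set (EuclideanSpace ℝ (Fin n)) :=
  {s | ∀ i, |s i - ((a i : ℝ) + (b i : ℝ)) / 2| ≤ 1 / 2 ∧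
      (a i ≠ b i → s i = ((a i : ℝ) + (b i : ℝ)) / 2)}

/-- `Ω̂ = ⋃_{x ∈ Ω} Q₁(x) ⊂ ℝ^n`. -/
def hatSet {n : ℕ} (Ω : Set (Fin n → ℤ)) : Set (EuclideanSpace ℝ (Fin n)) :=
  ⋃ x ∈ Ω, {y : EuclideanSpace ℝ (Fin n) | ∀ i, |y i - (x i : ℝ)| ≤ 1 / 2}

/-- The `(n−1)`-dimensional Hausdorff measure on `ℝ^n`. -/
noncomputable def hMeas (n : ℕ) : MeasureTheory.Measure (EuclideanSpace ℝ (Fin n)) :=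
  MeasureTheory.Measure.hausdorffMeasure ((n : ℝ) - 1)

/-- The graph with vertex set `Ω̄` and edge set `E(Ω, Ω̄)`. -/
def bgraph {n : ℕ} (Ω : Set (Fin n → ℤ)) : SimpleGraph ↥(cl Ω) where
  Adj x y := adj (x : Fin n → ℤ) (y : Fin n → ℤ) ∧ ((x : Fin n → ℤ) ∈ Ω ∨ (y : Fin n → ℤ) ∈ Ω)
  symm := by
    constructor
    rintro x y ⟨h1, h2⟩
    refine ⟨?_, h2.symm⟩
    unfold adj at h1 ⊢
    rw [← h1]
    exact Finset.sum_congr rfl fun i _ => abs_sub_comm _ _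
  loopless := by
    constructor
    rintro x ⟨h1, -⟩
    unfold adj at h1
    simp at h1

open Classical in
/-- Extension of a function on `Ω̄` to the whole lattice by zero. -/
noncomputable def ext {n : ℕ} (Ω : Set (Fin n → ℤ)) (u : ↥(cl Ω) → ℝ) :
    (Fin n → ℤ) → ℝ :=
  fun y => if h : y ∈ cl Ω then u ⟨y, h⟩ else 0

/-- "Good" pairs of boundary edges (edges represented as ordered pairs as in `bEdge`). -/
def goodPairs {n : ℕ} (Ω : Set (Fin n → ℤ)) :
    Set (((Fin n → ℤ) × (Fin n → ℤ)) × ((Fin n → ℤ) × (Fin n → ℤ))) :=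
  {q | q.1 ∈ bEdge Ω ∧ q.2 ∈ bEdge Ω ∧ (q.1.2 ≠ q.2.2 ∨ q.1.2 ∉ badVb Ω)}


section Lattice

variable {n : ℕ}

lemma adj_comm {x y : Fin n → ℤ} : adj x y ↔ adj y x := by
  simp only [adj, abs_sub_comm (x _)]

lemma adj_add_single (x : Fin n → ℤ) (i : Fin n) : adj x (x + Pi.single i 1) := by
  simp [adj, Pi.single_apply, apply_ite]

lemma setOf_adj_finite (x : Fin n → ℤ) : {y | adj x y}.Finite := by
  refine (Set.Finite.pi (t := fun i => Set.Icc (x i - 1) (x i + 1))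
    fun _ => Set.finite_Icc _ _).subset fun y hy i _ => ?_
  have hle : |x i - y i| ≤ 1 :=
    hy ▸ Finset.single_le_sum (f := fun j => |x j - y j|) (fun _ _ => abs_nonneg _)
      (Finset.mem_univ i)
  constructor <;> linarith [abs_le.1 hle]

variable {Ω : Set (Fin n → ℤ)}

lemma cl_finite (hΩ : Ω.Finite) : (cl Ω).Finite := by
  refine hΩ.union ((hΩ.biUnion fun y _ => setOf_adj_finite y).subset ?_)
  rintro x ⟨-, y, hy, hxy⟩
  exact Set.mem_biUnion hy (adj_comm.1 hxy)

lemma mem_cl_of_adj {x y : Fin n → ℤ} (hx : x ∈ Ω) (hxy : adj x y) : y ∈ cl Ω := by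
  by_cases hy : y ∈ Ω
  · exact Or.inl hy
  · exact Or.inr ⟨hy, x, hx, adj_comm.1 hxy⟩

lemma vb_subset_cl : vb Ω ⊆ cl Ω := Set.subset_union_right

lemma ext_comp_val (ψ : cl Ω → ℝ) : ext Ω ψ ∘ Subtype.val = ψ :=
  funext fun x => dif_pos x.2

lemma image_val_neighborSet (x : cl Ω) :
    Subtype.val '' (bgraph Ω).neighborSet x = {y | adj x y ∧ ((x : Fin n → ℤ) ∈ Ω ∨ y ∈ Ω)} := by
  ext y
  refine ⟨fun ⟨z, hz, hzy⟩ => hzy ▸ hz, fun ⟨hxy, hxΩ⟩ => ⟨⟨y, ?_⟩, ⟨hxy, hxΩ⟩, rfl⟩⟩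
  rcases hxΩ with hx | hy
  · exact mem_cl_of_adj hx hxy
  · exact Or.inl hy

end Lattice

section Laplacian

open scoped Matrix

variable {n : ℕ} {Ω : Set (Fin n → ℤ)} [Fintype (cl Ω)]

lemma exists_mem_vb_reachable (i : Fin n) (z : cl Ω) :
    ∃ x : cl Ω, (x : Fin n → ℤ) ∈ vb Ω ∧ (bgraph Ω).Reachable z x := by
  classical
  obtain ⟨y, hy, hmax⟩ := Finset.exists_max_image
    (Finset.univ.filter fun y => (bgraph Ω).Reachable z y) (fun y : cl Ω => (y : Fin n → ℤ) i)
    ⟨z, by simp⟩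
  rw [Finset.mem_filter] at hy
  rcases y.2 with hyΩ | hyvb
  · -- a point of `Ω` maximizing the `i`-th coordinate would have its upper neighbour in `Ω̄`
    have hadj := adj_add_single (y : Fin n → ℤ) i
    have hle := hmax ⟨_, mem_cl_of_adj hyΩ hadj⟩ (Finset.mem_filter.2
      ⟨Finset.mem_univ _, hy.2.trans (SimpleGraph.Adj.reachable ⟨hadj, Or.inl hyΩ⟩)⟩)
    simp only [Pi.add_apply, Pi.single_eq_same] at hle
    linarith
  · exact ⟨y, hyvb, hy.2⟩

variable [DecidableRel (bgraph Ω).Adj]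

lemma lapMatrix_mulVec_comp_val (u : (Fin n → ℤ) → ℝ) (x : cl Ω) :
    ((bgraph Ω).lapMatrix ℝ *ᵥ (u ∘ Subtype.val)) x =
      ∑ᶠ y ∈ {y | adj x y ∧ ((x : Fin n → ℤ) ∈ Ω ∨ y ∈ Ω)}, (u x - u y) := by
  rw [← image_val_neighborSet, finsum_mem_image Subtype.val_injective.injOn,
    ← SimpleGraph.coe_neighborFinset, finsum_mem_coe_finset, Finset.sum_sub_distrib,
    Finset.sum_const, SimpleGraph.card_neighborFinset_eq_degree, nsmul_eq_mul,
    SimpleGraph.lapMatrix_mulVec_apply]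
  rfl

lemma lapMatrix_mulVec_comp_val_of_mem (u : (Fin n → ℤ) → ℝ) {x : cl Ω}
    (hx : (x : Fin n → ℤ) ∈ Ω) :
    ((bgraph Ω).lapMatrix ℝ *ᵥ (u ∘ Subtype.val)) x = -lap u x := by
  have hset : {y | adj x y ∧ ((x : Fin n → ℤ) ∈ Ω ∨ y ∈ Ω)} = {y | adj x y} := by
    simp [hx]
  rw [lapMatrix_mulVec_comp_val, hset, lap, ← finsum_mem_neg_distrib _ (setOf_adj_finite _)]
  simp_rw [neg_sub]

lemma lapMatrix_mulVec_comp_val_of_mem_vb (u : (Fin n → ℤ) → ℝ) {x : cl Ω}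
    (hx : (x : Fin n → ℤ) ∈ vb Ω) :
    ((bgraph Ω).lapMatrix ℝ *ᵥ (u ∘ Subtype.val)) x = normalDeriv Ω u x := by
  have hset : {y | adj x y ∧ ((x : Fin n → ℤ) ∈ Ω ∨ y ∈ Ω)} = {y | y ∈ Ω ∧ adj x y} := by
    simp [hx.1, and_comm]
  rw [lapMatrix_mulVec_comp_val, hset, normalDeriv]

lemma eq_zero_of_lapMatrix_mulVec_eq_zero (i : Fin n) {ψ : cl Ω → ℝ}
    (hΩ : ∀ x : cl Ω, (x : Fin n → ℤ) ∈ Ω → ((bgraph Ω).lapMatrix ℝ *ᵥ ψ) x = 0)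
    (hvb : ∀ x : cl Ω, (x : Fin n → ℤ) ∈ vb Ω → ψ x = 0) : ψ = 0 := by
  -- the Dirichlet energy `ψ ⬝ᵥ L ψ` vanishes termwise
  have henergy : Matrix.toLinearMap₂' ℝ ((bgraph Ω).lapMatrix ℝ) ψ ψ = 0 := by
    rw [Matrix.toLinearMap₂'_apply']
    refine Finset.sum_eq_zero fun x _ => ?_
    rcases x.2 with hx | hx
    · rw [hΩ x hx, mul_zero]
    · rw [hvb x hx, zero_mul]
  have hconst := (SimpleGraph.lapMatrix_toLinearMap₂'_apply'_eq_zero_iff_forall_reachable _ ψ).1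
    henergy
  funext z
  obtain ⟨x, hx, hzx⟩ := exists_mem_vb_reachable i z
  rw [hconst z x hzx, hvb x hx, Pi.zero_apply]

lemma isHarmonicExt_ext {ψ : cl Ω → ℝ}
    (hψ : ∀ x : cl Ω, (x : Fin n → ℤ) ∈ Ω → ((bgraph Ω).lapMatrix ℝ *ᵥ ψ) x = 0) :
    IsHarmonicExt Ω (ψ ∘ Set.inclusion vb_subset_cl) (ext Ω ψ) := by
  refine ⟨fun x hx => ?_, fun x hx => dif_pos (vb_subset_cl hx)⟩
  rw [← neg_eq_zero, ← lapMatrix_mulVec_comp_val_of_mem (x := ⟨x, Or.inl hx⟩) _ hx, ext_comp_val,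
    hψ _ hx]

open Classical in
noncomputable def dirichletProblemMap : (cl Ω → ℝ) →ₗ[ℝ] (cl Ω → ℝ) where
  toFun ψ x := if (x : Fin n → ℤ) ∈ Ω then ((bgraph Ω).lapMatrix ℝ *ᵥ ψ) x else ψ x
  map_add' ψ χ := by ext x; by_cases hx : (x : Fin n → ℤ) ∈ Ω <;> simp [hx, Matrix.mulVec_add]
  map_smul' c ψ := by ext x; by_cases hx : (x : Fin n → ℤ) ∈ Ω <;> simp [hx, Matrix.mulVec_smul]

lemma dirichletProblemMap_apply_of_mem (ψ : cl Ω → ℝ) {x : cl Ω} (hx : (x : Fin n → ℤ) ∈ Ω) :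
    dirichletProblemMap ψ x = ((bgraph Ω).lapMatrix ℝ *ᵥ ψ) x :=
  if_pos hx

lemma dirichletProblemMap_apply_of_mem_vb (ψ : cl Ω → ℝ) {x : cl Ω}
    (hx : (x : Fin n → ℤ) ∈ vb Ω) : dirichletProblemMap ψ x = ψ x :=
  if_neg hx.1

lemma exists_isHarmonicExt (i : Fin n) (φ : vb Ω → ℝ) : ∃ u, IsHarmonicExt Ω φ u := by
  classical
  have hinj : Function.Injective (dirichletProblemMap (Ω := Ω)) := by
    rw [← LinearMap.ker_eq_bot, LinearMap.ker_eq_bot']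
    intro ψ hψ
    refine eq_zero_of_lapMatrix_mulVec_eq_zero i (fun x hx => ?_) (fun x hx => ?_)
    · rw [← dirichletProblemMap_apply_of_mem ψ hx, hψ, Pi.zero_apply]
    · rw [← dirichletProblemMap_apply_of_mem_vb ψ hx, hψ, Pi.zero_apply]
  obtain ⟨ψ, hψ⟩ := LinearMap.injective_iff_surjective.1 hinj
    fun x => if hx : (x : Fin n → ℤ) ∈ vb Ω then φ ⟨x, hx⟩ else 0
  have hlap : ∀ x : cl Ω, (x : Fin n → ℤ) ∈ Ω → ((bgraph Ω).lapMatrix ℝ *ᵥ ψ) x = 0 :=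
    fun x hx => by
      rw [← dirichletProblemMap_apply_of_mem ψ hx, hψ]
      exact dif_neg fun h => h.1 hx
  refine ⟨ext Ω ψ, (isHarmonicExt_ext hlap).1, fun x hx => ?_⟩
  rw [(isHarmonicExt_ext hlap).2 x hx, Function.comp_apply,
    ← dirichletProblemMap_apply_of_mem_vb ψ (x := ⟨x, vb_subset_cl hx⟩) hx, hψ]
  exact dif_pos hx

lemma IsHarmonicExt.comp_val_eq (i : Fin n) {φ : vb Ω → ℝ} {u v : (Fin n → ℤ) → ℝ}
    (hu : IsHarmonicExt Ω φ u) (hv : IsHarmonicExt Ω φ v) :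
    (u ∘ Subtype.val : cl Ω → ℝ) = v ∘ Subtype.val := by
  rw [← sub_eq_zero]
  refine eq_zero_of_lapMatrix_mulVec_eq_zero i (fun x hx => ?_) (fun x hx => ?_)
  · rw [Matrix.mulVec_sub, Pi.sub_apply, lapMatrix_mulVec_comp_val_of_mem _ hx,
      lapMatrix_mulVec_comp_val_of_mem _ hx, hu.1 _ hx, hv.1 _ hx, sub_self]
  · simp [hu.2 _ hx, hv.2 _ hx]

lemma isHarmonicExt_harmExt (i : Fin n) (φ : vb Ω → ℝ) : IsHarmonicExt Ω φ (harmExt Ω φ) := by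
  have h := exists_isHarmonicExt i φ
  rw [harmExt, dif_pos h]
  exact h.choose_spec

lemma dtn_apply_of_isHarmonicExt (i : Fin n) {φ : vb Ω → ℝ} {u : (Fin n → ℤ) → ℝ}
    (hu : IsHarmonicExt Ω φ u) (x : vb Ω) :
    dtn Ω φ x = ((bgraph Ω).lapMatrix ℝ *ᵥ (u ∘ Subtype.val)) (Set.inclusion vb_subset_cl x) := by
  rw [← (isHarmonicExt_harmExt i φ).comp_val_eq i hu, lapMatrix_mulVec_comp_val_of_mem_vb _ x.2]
  rfl

noncomputable def kerLapRestrictVb :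
    LinearMap.ker ((bgraph Ω).lapMatrix ℝ).toLin' →ₗ[ℝ] (vb Ω → ℝ) :=
  LinearMap.funLeft ℝ ℝ (Set.inclusion vb_subset_cl) ∘ₗ
    (LinearMap.ker ((bgraph Ω).lapMatrix ℝ).toLin').subtype

lemma kerLapRestrictVb_injective (i : Fin n) : Function.Injective (kerLapRestrictVb (Ω := Ω)) := by
  rw [← LinearMap.ker_eq_bot, LinearMap.ker_eq_bot']
  rintro ⟨ψ, hψ⟩ hψ0
  rw [LinearMap.mem_ker, Matrix.toLin'_apply] at hψ
  refine Subtype.ext (eq_zero_of_lapMatrix_mulVec_eq_zero i (fun x _ => by rw [hψ, Pi.zero_apply])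
    fun x hx => congrFun hψ0 ⟨x, hx⟩)

lemma setOf_dtn_eq_zero (i : Fin n) :
    {φ | dtn Ω φ = 0} = LinearMap.range (kerLapRestrictVb (Ω := Ω)) := by
  ext φ
  constructor
  · intro hφ
    have hu := isHarmonicExt_harmExt i φ
    refine ⟨⟨harmExt Ω φ ∘ Subtype.val, ?_⟩, funext fun x => hu.2 x x.2⟩
    rw [LinearMap.mem_ker, Matrix.toLin'_apply]
    funext x
    rcases x.2 with hx | hx
    · rw [lapMatrix_mulVec_comp_val_of_mem _ hx, hu.1 _ hx, neg_zero, Pi.zero_apply]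
    · rw [lapMatrix_mulVec_comp_val_of_mem_vb _ hx]
      exact congrFun hφ ⟨x, hx⟩
  · rintro ⟨⟨ψ, hψ⟩, rfl⟩
    rw [LinearMap.mem_ker, Matrix.toLin'_apply] at hψ
    have hext := isHarmonicExt_ext fun x _ => by rw [hψ, Pi.zero_apply]
    funext x
    exact (dtn_apply_of_isHarmonicExt i hext x).trans (by rw [ext_comp_val, hψ]; rfl)

end Laplacian

theorem stmt_7_general (n : ℕ) (hn : 1 ≤ n) (Ω : Set (Fin n → ℤ)) (hfin : Ω.Finite) :
    Set.finrank ℝ {φ : ↥(vb Ω) → ℝ | dtn Ω φ = 0} =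
      Nat.card (bgraph Ω).ConnectedComponent := by
  classical
  have := (cl_finite hfin).fintype
  rw [Set.finrank, setOf_dtn_eq_zero ⟨0, hn⟩, Submodule.span_eq,
    LinearMap.finrank_range_of_inj (kerLapRestrictVb_injective ⟨0, hn⟩),
    ← SimpleGraph.card_connectedComponent_eq_finrank_ker_toLin'_lapMatrix,
    Nat.card_eq_fintype_card]

theorem stmt_7 (n : ℕ) (hn : 1 ≤ n) (Ω : Set (Fin n → ℤ)) (hfin : Ω.Finite)
    (hne : Ω.Nonempty) :
    Set.finrank ℝ {φ : ↥(vb Ω) → ℝ | dtn Ω φ = 0} =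
      Nat.card (bgraph Ω).ConnectedComponent :=
  stmt_7_general n hn Ω hfin

end SteklovLattice
end

section
/- For each positive integer R, let Ω_R ⊂ ℤ² be the set Ω_R = {(x,y) ∈ ℤ² : (R = |x| and |y| ≤ R) or (R = |y| and |x| ≤ R)} ∪ {(x,y) ∈ ℤ² : |x| ≤ R−1, |y| ≤ R−1, and x + y is odd}. Then lim_{R→∞} |δ'Ω_R| / |Ω_R| = 1. -/
open scoped ENNReal

namespace SteklovLattice

/-!
The sets `Ω_R` and `δ'Ω_R` tile the square `[-R, R]²`. Indeed, the bad vertices are exactly the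
even points (`x + y` even) of the inner square `[-(R-1), R-1]²`: such a point has only odd inner
points and frame points as neighbours, while every point beyond the frame has a
neighbour outside `Ω_R`. The inner square has `2R(R-1) + 1` even points, so
`|δ'Ω_R| = 2R² - 2R + 1` and `|Ω_R| = (2R+1)² - |δ'Ω_R| = 2R² + 6R`, whose ratio tends to `1`.
-/

open Finset Filter Topology Polynomial

theorem tendsto_quadratic_div_quadratic_nat {a b c d e : ℝ} (ha : a ≠ 0) :
    Tendsto (fun n : ℕ => (a * n ^ 2 + b * n + c) / (a * n ^ 2 + d * n + e)) atTop (𝓝 1) := by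
  have h := div_tendsto_atTop_leadingCoeff_div_of_degree_eq (C a * X ^ 2 + C b * X + C c)
    (C a * X ^ 2 + C d * X + C e) (by rw [degree_quadratic ha, degree_quadratic ha])
  rw [leadingCoeff_quadratic ha, leadingCoeff_quadratic ha, div_self ha] at h
  simpa [Function.comp_def] using h.comp tendsto_natCast_atTop_atTop

theorem card_filter_even_Icc_neg (m : ℕ) :
    #{k ∈ Icc (-(m : ℤ)) m | Even k} = 2 * (m / 2) + 1 := by
  have h : {k ∈ Icc (-(m : ℤ)) m | Even k} =
      (Icc (-((m / 2 : ℕ) : ℤ)) (m / 2 : ℕ)).image (2 * ·) := by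
    ext k
    simp only [mem_filter, mem_Icc, mem_image, Int.even_iff]
    constructor
    · rintro ⟨⟨h1, h2⟩, h3⟩
      exact ⟨k / 2, by omega, by omega⟩
    · rintro ⟨j, hj, rfl⟩
      omega
  rw [h, card_image_of_injective _ fun i j hij => by omega, Int.card_Icc]
  omega

theorem card_filter_odd_Icc_neg (m : ℕ) :
    #{k ∈ Icc (-(m : ℤ)) m | Odd k} = 2 * ((m + 1) / 2) := by
  have h : {k ∈ Icc (-(m : ℤ)) m | Odd k} =
      (Icc (-(((m + 1) / 2 : ℕ) : ℤ)) (((m + 1) / 2 : ℕ) - 1)).image (2 * · + 1) := by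
    ext k
    simp only [mem_filter, mem_Icc, mem_image, Int.odd_iff]
    constructor
    · rintro ⟨⟨h1, h2⟩, h3⟩
      exact ⟨(k - 1) / 2, by omega, by omega⟩
    · rintro ⟨j, hj, rfl⟩
      omega
  rw [h, card_image_of_injective _ fun i j hij => by omega, Int.card_Icc]
  omega

noncomputable def box (m : ℕ) : Finset (Fin 2 → ℤ) :=
  Fintype.piFinset fun _ => Icc (-(m : ℤ)) m

theorem mem_box {m : ℕ} {x : Fin 2 → ℤ} : x ∈ box m ↔ |x 0| ≤ m ∧ |x 1| ≤ m := by
  simp [box, Fin.forall_fin_two, abs_le]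

theorem card_box (m : ℕ) : #(box m) = (2 * m + 1) ^ 2 := by
  simp only [box, Fintype.card_piFinset, Int.card_Icc, prod_const, card_univ, Fintype.card_fin]
  congr 1
  omega

/-- Even and odd points of `[-m, m]` number `E` and `O` with `E - O = ±1`, so the even points of
the square, `E² + O²`, outnumber the odd ones, `2EO`, by exactly one. -/
theorem card_box_filter_even (m : ℕ) :
    #{x ∈ box m | Even (x 0 + x 1)} = 2 * m * (m + 1) + 1 := by
  have h : {x ∈ box m | Even (x 0 + x 1)} =
      Fintype.piFinset (fun _ : Fin 2 => {k ∈ Icc (-(m : ℤ)) m | Even k}) ∪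
        Fintype.piFinset (fun _ : Fin 2 => {k ∈ Icc (-(m : ℤ)) m | Odd k}) := by
    ext x
    simp only [box, mem_filter, mem_union, Fintype.mem_piFinset, Fin.forall_fin_two, Int.even_add,
      ← Int.not_even_iff_odd]
    tauto
  have hdisj : Disjoint (Fintype.piFinset (fun _ : Fin 2 => {k ∈ Icc (-(m : ℤ)) m | Even k}))
      (Fintype.piFinset (fun _ : Fin 2 => {k ∈ Icc (-(m : ℤ)) m | Odd k})) := by
    refine disjoint_left.2 fun x hE hO => ?_
    simp only [Fintype.mem_piFinset, mem_filter] at hE hO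
    exact Int.not_even_iff_odd.2 (hO 0).2 (hE 0).2
  rw [h, card_union_of_disjoint hdisj, Fintype.card_piFinset, Fintype.card_piFinset,
    card_filter_even_Icc_neg, card_filter_odd_Icc_neg, Fin.prod_const, Fin.prod_const]
  rcases Nat.even_or_odd' m with ⟨k, rfl | rfl⟩
  · rw [show 2 * k / 2 = k by omega, show (2 * k + 1) / 2 = k by omega]
    ring
  · rw [show (2 * k + 1) / 2 = k by omega, show (2 * k + 1 + 1) / 2 = k + 1 by omega]
    ring

def frame (R : ℕ) : Set (Fin 2 → ℤ) :=
  {x | (|x 0| = (R : ℤ) ∧ |x 1| ≤ (R : ℤ)) ∨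
      (|x 1| = (R : ℤ) ∧ |x 0| ≤ (R : ℤ))} ∪
    {x | |x 0| ≤ (R : ℤ) - 1 ∧ |x 1| ≤ (R : ℤ) - 1 ∧ Odd (x 0 + x 1)}

theorem adj_iff_natAbs (x y : Fin 2 → ℤ) :
    adj x y ↔ (x 0 - y 0).natAbs + (x 1 - y 1).natAbs = 1 := by
  rw [adj, Fin.sum_univ_two, Int.abs_eq_natAbs, Int.abs_eq_natAbs]
  omega

theorem mem_frame_iff_natAbs (R : ℕ) (x : Fin 2 → ℤ) :
    x ∈ frame R ↔ ((x 0).natAbs = R ∧ (x 1).natAbs ≤ R) ∨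
      ((x 1).natAbs = R ∧ (x 0).natAbs ≤ R) ∨
      ((x 0).natAbs + 1 ≤ R ∧ (x 1).natAbs + 1 ≤ R ∧ (x 0 + x 1) % 2 = 1) := by
  simp only [frame, Set.mem_union, Set.mem_ofPred_eq, Int.abs_eq_natAbs, Int.odd_iff]
  omega

theorem badVb_frame_succ (R : ℕ) :
    badVb (frame (R + 1)) = ↑{x ∈ box R | Even (x 0 + x 1)} := by
  ext x
  simp only [badVb, vb, Set.mem_ofPred_eq, coe_filter, mem_box, Int.abs_eq_natAbs, Int.even_iff]
  constructor
  · rintro ⟨⟨hx, -⟩, hnbrs⟩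
    have h1 := hnbrs ![x 0 + 1, x 1] (by simp [adj_iff_natAbs])
    have h2 := hnbrs ![x 0 - 1, x 1] (by simp [adj_iff_natAbs])
    have h3 := hnbrs ![x 0, x 1 + 1] (by simp [adj_iff_natAbs])
    have h4 := hnbrs ![x 0, x 1 - 1] (by simp [adj_iff_natAbs])
    simp only [mem_frame_iff_natAbs, Matrix.cons_val_zero, Matrix.cons_val_one]
      at hx h1 h2 h3 h4
    omega
  · rintro ⟨⟨h0, h1⟩, heven⟩
    refine ⟨⟨?_, ![x 0 + 1, x 1], ?_, by simp [adj_iff_natAbs]⟩, fun y hy => ?_⟩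
    · rw [mem_frame_iff_natAbs]
      omega
    · simp only [mem_frame_iff_natAbs, Matrix.cons_val_zero, Matrix.cons_val_one]
      omega
    · rw [adj_iff_natAbs] at hy
      rw [mem_frame_iff_natAbs]
      omega

theorem ncard_badVb_frame_succ (R : ℕ) :
    (badVb (frame (R + 1))).ncard = 2 * R * (R + 1) + 1 := by
  rw [badVb_frame_succ, Set.ncard_coe_finset, card_box_filter_even]

theorem frame_union_badVb_frame_succ (R : ℕ) :
    frame (R + 1) ∪ badVb (frame (R + 1)) = ↑(box (R + 1)) := by
  rw [badVb_frame_succ]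
  ext x
  simp only [Set.mem_union, mem_frame_iff_natAbs, coe_filter, Set.mem_ofPred_eq,
    mem_coe, mem_box, Int.abs_eq_natAbs, Int.even_iff]
  omega

theorem ncard_frame_succ (R : ℕ) : (frame (R + 1)).ncard = 2 * (R + 1) * (R + 4) := by
  have hdisj : Disjoint (frame (R + 1)) (badVb (frame (R + 1))) :=
    Set.disjoint_left.2 fun _ hx hbad => hbad.1.1 hx
  have hfin : (frame (R + 1) ∪ badVb (frame (R + 1))).Finite := by
    rw [frame_union_badVb_frame_succ]
    exact finite_toSet _
  have h := Set.ncard_union_eq hdisj (hfin.subset Set.subset_union_left)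
    (hfin.subset Set.subset_union_right)
  rw [frame_union_badVb_frame_succ, Set.ncard_coe_finset, card_box, ncard_badVb_frame_succ] at h
  nlinarith

theorem stmt_11 (Ω : ℕ → Set (Fin 2 → ℤ))
    (hΩ : ∀ R : ℕ, Ω R =
      {x | (|x 0| = (R : ℤ) ∧ |x 1| ≤ (R : ℤ)) ∨ (|x 1| = (R : ℤ) ∧ |x 0| ≤ (R : ℤ))} ∪
      {x | |x 0| ≤ (R : ℤ) - 1 ∧ |x 1| ≤ (R : ℤ) - 1 ∧ Odd (x 0 + x 1)}) :
    Filter.Tendsto (fun R => ((badVb (Ω R)).ncard : ℝ) / ((Ω R).ncard : ℝ))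
      Filter.atTop (nhds 1) := by
  obtain rfl : Ω = frame := funext hΩ
  rw [← tendsto_add_atTop_iff_nat 1]
  simp only [ncard_badVb_frame_succ, ncard_frame_succ]
  convert tendsto_quadratic_div_quadratic_nat (a := 2) (b := 2) (c := 1) (d := 10) (e := 8)
    two_ne_zero using 2 with R
  push_cast
  ring

end SteklovLattice
end

section
/- Let n ≥ 1, let Ω be a finite subset of the integer lattice graph ℤ^n, and let f : (∂Ω)²_g → δΩ × δΩ be any map such that f(τ₁,τ₂) = (P(τ₁⊥), P(τ₂⊥)) whenever P(τ₁⊥) ≠ P(τ₂⊥), and f(τ₁,τ₂) = (P(τ₁⊥), z) for some z ∈ Q₂(P(τ₁⊥)) ∩ δΩ with z ≠ P(τ₁⊥) whenever P(τ₁⊥) = P(τ₂⊥) ∉ δ'Ω. Then the multiplicity of f is at most 8n²: every point of δΩ × δΩ has at most 8n² preimages under f. -/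
open scoped ENNReal

namespace SteklovLattice

/-!
A preimage of `(x, y)` is a pair of boundary edges whose outer endpoints are `(x, y)`, or `(x, x)`
when they coincide, since `f` keeps `P(τ₁⊥)` as its first coordinate in both cases. Such a pair is
determined by its two inner endpoints, each one of the `2n` lattice neighbours of its outer endpoint,
so there are at most `(2n)² + (2n)² = 8n²` preimages.
-/

section

open Finset

lemma exists_eq_single_of_sum_abs_eq_one {ι : Type*} [Fintype ι] [DecidableEq ι] {d : ι → ℤ}
    (h : ∑ i, |d i| = 1) : ∃ i, |d i| = 1 ∧ d = Pi.single i (d i) := by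
  obtain ⟨i, -, hi⟩ := exists_ne_zero_of_sum_ne_zero (h ▸ one_ne_zero : ∑ i, |d i| ≠ 0)
  have hnonneg : ∀ j ∈ univ, 0 ≤ |d j| := fun j _ => abs_nonneg _
  have hone : |d i| = 1 :=
    le_antisymm (h ▸ single_le_sum hnonneg (mem_univ i)) (Int.one_le_abs (abs_ne_zero.mp hi))
  refine ⟨i, hone, funext fun j => ?_⟩
  rcases eq_or_ne j i with rfl | hj
  · simp
  · have := add_le_sum hnonneg (mem_univ i) (mem_univ j) hj.symm
    rw [Pi.single_eq_of_ne hj, ← abs_eq_zero]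
    linarith [abs_nonneg (d j)]

variable {n : ℕ}

lemma exists_eq_add_single_of_adj {a x : Fin n → ℤ} (h : adj a x) :
    ∃ i, ∃ s ∈ ({1, -1} : Finset ℤ), a = x + Pi.single i s := by
  obtain ⟨i, hi, hd⟩ := exists_eq_single_of_sum_abs_eq_one (d := a - x) h
  refine ⟨i, (a - x) i, ?_, by rw [← hd, add_sub_cancel]⟩
  rcases (abs_eq zero_le_one).mp hi with h1 | h1 <;> simp [h1]

def neighbors (x : Fin n → ℤ) : Finset (Fin n → ℤ) :=
  (univ ×ˢ ({1, -1} : Finset ℤ)).image fun p => x + Pi.single p.1 p.2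

lemma card_neighbors_le (x : Fin n → ℤ) : #(neighbors x) ≤ 2 * n := by
  refine card_image_le.trans ?_
  rw [card_product, card_univ, Fintype.card_fin, mul_comm]
  exact Nat.mul_le_mul_right n card_le_two

lemma mem_neighbors_of_adj {a x : Fin n → ℤ} (h : adj a x) : a ∈ neighbors x := by
  obtain ⟨i, s, hs, rfl⟩ := exists_eq_add_single_of_adj h
  exact mem_image.mpr ⟨(i, s), mem_product.mpr ⟨mem_univ i, hs⟩, rfl⟩

def edgePairsAt (x y : Fin n → ℤ) :
    Finset (((Fin n → ℤ) × (Fin n → ℤ)) × ((Fin n → ℤ) × (Fin n → ℤ))) :=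
  (neighbors x ×ˢ neighbors y).image fun p => ((p.1, x), (p.2, y))

lemma card_edgePairsAt_le (x y : Fin n → ℤ) : #(edgePairsAt x y) ≤ 4 * n ^ 2 :=
  calc #(edgePairsAt x y) ≤ #(neighbors x ×ˢ neighbors y) := card_image_le
    _ = #(neighbors x) * #(neighbors y) := card_product _ _
    _ ≤ (2 * n) * (2 * n) := Nat.mul_le_mul (card_neighbors_le x) (card_neighbors_le y)
    _ = 4 * n ^ 2 := by ring

lemma mem_edgePairsAt {a c x y : Fin n → ℤ} (ha : adj a x) (hc : adj c y) :
    ((a, x), (c, y)) ∈ edgePairsAt x y :=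
  mem_image.mpr ⟨(a, c), mem_product.mpr ⟨mem_neighbors_of_adj ha, mem_neighbors_of_adj hc⟩, rfl⟩

end

theorem stmt_15_general (n : ℕ) (Ω : Set (Fin n → ℤ))
    (f : ((Fin n → ℤ) × (Fin n → ℤ)) × ((Fin n → ℤ) × (Fin n → ℤ)) →
      (Fin n → ℤ) × (Fin n → ℤ))
    (hf1 : ∀ q ∈ goodPairs Ω, q.1.2 ≠ q.2.2 → f q = (q.1.2, q.2.2))
    (hf2 : ∀ q ∈ goodPairs Ω, q.1.2 = q.2.2 →
      (f q).1 = q.1.2 ∧ (f q).2 ∈ vb Ω ∧ (∀ i, |(f q).2 i - q.1.2 i| ≤ 1) ∧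
        (f q).2 ≠ q.1.2) :
    ∀ b : (Fin n → ℤ) × (Fin n → ℤ),
      ({q | q ∈ goodPairs Ω ∧ f q = b}).ncard ≤ 8 * n ^ 2 := by
  rintro ⟨x, y⟩
  have hsub : {q | q ∈ goodPairs Ω ∧ f q = (x, y)} ⊆ ↑(edgePairsAt x y ∪ edgePairsAt x x) := by
    rintro q ⟨hq, hfq⟩
    obtain ⟨⟨a, x'⟩, ⟨c, y'⟩⟩ := q
    have ha : adj a x' := hq.1.1
    have hc : adj c y' := hq.2.1.1
    rcases eq_or_ne x' y' with rfl | hne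
    · obtain rfl : x = x' := by simpa [hfq] using (hf2 _ hq rfl).1
      exact Finset.mem_union_right _ (mem_edgePairsAt ha hc)
    · obtain ⟨rfl, rfl⟩ := Prod.ext_iff.mp ((hf1 _ hq hne).symm.trans hfq)
      exact Finset.mem_union_left _ (mem_edgePairsAt ha hc)
  calc _ ≤ (↑(edgePairsAt x y ∪ edgePairsAt x x) : Set _).ncard :=
        Set.ncard_le_ncard hsub (Finset.finite_toSet _)
    _ ≤ (edgePairsAt x y).card + (edgePairsAt x x).card := by
        rw [Set.ncard_coe_finset]; exact Finset.card_union_le _ _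
    _ ≤ 4 * n ^ 2 + 4 * n ^ 2 := add_le_add (card_edgePairsAt_le x y) (card_edgePairsAt_le x x)
    _ = 8 * n ^ 2 := by ring

theorem stmt_15 (n : ℕ) (hn : 1 ≤ n) (Ω : Set (Fin n → ℤ)) (hfin : Ω.Finite)
    (f : ((Fin n → ℤ) × (Fin n → ℤ)) × ((Fin n → ℤ) × (Fin n → ℤ)) →
      (Fin n → ℤ) × (Fin n → ℤ))
    (hf1 : ∀ q ∈ goodPairs Ω, q.1.2 ≠ q.2.2 → f q = (q.1.2, q.2.2))
    (hf2 : ∀ q ∈ goodPairs Ω, q.1.2 = q.2.2 →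
      (f q).1 = q.1.2 ∧ (f q).2 ∈ vb Ω ∧ (∀ i, |(f q).2 i - q.1.2 i| ≤ 1) ∧
        (f q).2 ≠ q.1.2) :
    ∀ b : (Fin n → ℤ) × (Fin n → ℤ),
      ({q | q ∈ goodPairs Ω ∧ f q = b}).ncard ≤ 8 * n ^ 2 :=
  stmt_15_general n Ω f hf1 hf2

end SteklovLattice
end
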